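/- arXiv:2507.18375 — 3 statements merged into one kernel-verified Lean document; each statement's English description precedes it below -/
import Mathlib

section
/- There are a commutative semiring R and an element r ∈ R (one may take R = ℕ with its usual addition and multiplication, and r = 1) such that no terminating Semiring Turing Machine M over R satisfies ‖M‖ = rec_r on its inputs; i.e., for every terminating SRTM M over R there is an input x with ‖M‖(x) ≠ rec_r(x). -/
open scoped Classical

/-- A Semiring Turing Machine (SRTM) over a semiring `R` with input alphabet `A`.
States are `Fin nQ`; the tape alphabet is `A ⊕ Fin nE` where the `Fin nE` part
consists of the non-input symbols, among them the blank `blankE` and the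
semiring placeholder `phE`.  Transition weights are `Option R`: `some r` is a
fixed weight `r ∈ weights` (the finite set `R'`), `none` is the placeholder
`X` (weight taken from the tape). Directions: `true` = +1, `false` = −1. -/
structure SRTM (R : Type) (A : Type) where
  nQ : ℕ
  nE : ℕ
  blankE : Fin nE
  phE : Fin nE
  blank_ne_ph : blankE ≠ phE
  start : Fin nQ
  weights : Set R
  weights_fin : weights.Finite
  trans : Set ((Fin nQ × (A ⊕ Fin nE)) × (Fin nQ × (A ⊕ Fin nE)) × Bool × Option R)
  trans_fin : trans.Finite
  trans_wt : ∀ t ∈ trans, ∀ r : R, t.2.2.2 = some r → r ∈ weights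

namespace SRTM

variable {R A : Type}

abbrev Sym (M : SRTM R A) : Type := A ⊕ Fin M.nE

abbrev Trans (M : SRTM R A) : Type :=
  (Fin M.nQ × M.Sym) × (Fin M.nQ × M.Sym) × Bool × Option R

/-- A configuration: state, tape (symbol and semiring value per cell), head position. -/
abbrev Config (M : SRTM R A) : Type := Fin M.nQ × (ℕ → M.Sym × R) × ℕ

/-- The transitions applicable in a given configuration. -/
def applicable (M : SRTM R A) (c : M.Config) : Set M.Trans :=
  {t | t ∈ M.trans ∧ t.1.1 = c.1 ∧ t.1.2 = (c.2.1 c.2.2).1}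

/-- The configuration resulting from applying transition `t` in configuration `c`. -/
def stepTo (M : SRTM R A) (t : M.Trans) (c : M.Config) : M.Config :=
  ⟨t.2.1.1,
    Function.update c.2.1 c.2.2 (t.2.1.2, (c.2.1 c.2.2).2),
    ((c.2.2 : ℤ) + (if t.2.2.1 then 1 else -1)).natAbs⟩

/-- The weight of transition `t` in configuration `c`. -/
def wt (M : SRTM R A) (t : M.Trans) (c : M.Config) : R :=
  t.2.2.2.getD (c.2.1 c.2.2).2

/-- Fuel-indexed value of a configuration; for a terminating machine with path
length bound `ℓ s`, `val (ℓ s)` computes the recursively defined value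
`val(c) = ⊕_τ wt(τ,c) ⊗ val(τ(c))` (empty sum = 1). -/
noncomputable def val [CommSemiring R] (M : SRTM R A) : ℕ → M.Config → R
  | 0, _ => 1
  | n + 1, c =>
    if M.applicable c = ∅ then 1
    else ∑ᶠ t ∈ M.applicable c, M.wt t c * val M n (M.stepTo t c)

/-- The initial tape determined by an input string. -/
def initTape [Zero R] (M : SRTM R A) (s : List (A ⊕ R)) : ℕ → M.Sym × R := fun i =>
  match s[i]? with
  | some (Sum.inl a) => (Sum.inl a, 0)
  | some (Sum.inr r) => (Sum.inr M.phE, r)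
  | none => (Sum.inr M.blankE, 0)

def initConfig [Zero R] (M : SRTM R A) (s : List (A ⊕ R)) : M.Config :=
  ⟨M.start, M.initTape s, 0⟩

/-- One computation step. -/
def StepRel (M : SRTM R A) (c c' : M.Config) : Prop :=
  ∃ t ∈ M.applicable c, c' = M.stepTo t c

/-- `PathLen M n c c'`: there is a computation path of length `n` from `c` to `c'`. -/
def PathLen (M : SRTM R A) : ℕ → M.Config → M.Config → Prop
  | 0, c, c' => c' = c
  | n + 1, c, c'' => ∃ c', StepRel M c c' ∧ PathLen M n c' c''

/-- `ℓ` bounds the length of every computation path of `M` on every input. -/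
def BoundedBy [Zero R] (M : SRTM R A) (ℓ : List (A ⊕ R) → ℕ) : Prop :=
  ∀ (s : List (A ⊕ R)) (n : ℕ) (c : M.Config),
    PathLen M n (M.initConfig s) c → n ≤ ℓ s

def Terminating [Zero R] (M : SRTM R A) : Prop := ∃ ℓ, M.BoundedBy ℓ

/-- The output `‖M‖(s)` of a terminating SRTM, computed using a path length bound `ℓ`. -/
noncomputable def output [CommSemiring R] (M : SRTM R A)
    (ℓ : List (A ⊕ R) → ℕ) (s : List (A ⊕ R)) : R :=
  val M (ℓ s) (M.initConfig s)

end SRTM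

/-- `NP_new(R)`: functions computed by terminating SRTMs over `R` with
polynomially bounded computation path lengths. -/
def NPnew (R : Type) [CommSemiring R] (A : Type) [Fintype A]
    (f : List (A ⊕ R) → R) : Prop :=
  ∃ (M : SRTM R A) (ℓ : List (A ⊕ R) → ℕ) (p : Polynomial ℕ),
    M.BoundedBy ℓ ∧ (∀ s, ℓ s ≤ p.eval s.length) ∧ ∀ s, f s = M.output ℓ s

open Classical in
/-- The function `rec_r` on strings over `Σ_I ∪ R`: returns `r` if the first
symbol is the semiring value `r`, `x₀ ⊕ r` if the first symbol is a semiring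
value `x₀ ≠ r`, and `0` otherwise. -/
noncomputable def recr {R : Type} [CommSemiring R] {A : Type} (r : R)
    (x : List (A ⊕ R)) : R :=
  match x.head? with
  | some (Sum.inr s) => if s = r then r else s + r
  | _ => 0

/-- `rec_r` is not computable by any terminating SRTM over `R` (with any finite
input alphabet): every terminating SRTM differs from `rec_r` on some input. -/
def RecrUncomputable (R : Type) [CommSemiring R] (r : R) : Prop :=
  ∀ (A : Type), Fintype A →
    ∀ (M : SRTM R A) (ℓ : List (A ⊕ R) → ℕ), M.BoundedBy ℓ →
      ∃ x : List (A ⊕ R), M.output ℓ x ≠ recr r x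

/-!
Over `ℕ`, a machine that reads the single value `x` on its tape can only use it as a
transition weight, and the tape contents it can react to do not depend on `x`. Hence
its computation tree on the input `[x]` is the same for every `x`, of bounded depth,
and its output is a polynomial in `x`. A polynomial equal to `x + 1` for all `x ≥ 2`
is `X + 1`, so it takes the value `2` at `1`, whereas `rec₁ [1] = 1`.
-/

open Polynomial

namespace SRTM

variable {R A : Type} (M : SRTM R A)

def setVal (c : M.Config) (j : ℕ) (x : R) : M.Config :=
  ⟨c.1, Function.update c.2.1 j ((c.2.1 j).1, x), c.2.2⟩

variable {M}

lemma setVal_setVal (c : M.Config) (j : ℕ) (x y : R) :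
    M.setVal (M.setVal c j x) j y = M.setVal c j y := by
  simp [setVal]

lemma applicable_setVal (c : M.Config) (j : ℕ) (x : R) :
    M.applicable (M.setVal c j x) = M.applicable c := by
  by_cases h : c.2.2 = j
  · subst h; simp [applicable, setVal]
  · simp [applicable, setVal, Function.update_of_ne h]

lemma stepTo_setVal (t : M.Trans) (c : M.Config) (j : ℕ) (x : R) :
    M.stepTo t (M.setVal c j x) = M.setVal (M.stepTo t c) j x := by
  simp only [stepTo, setVal, Prod.mk.injEq, true_and, and_true]
  funext i
  by_cases hi : i = c.2.2 <;> by_cases hj : i = j <;> simp_all [Function.update_apply]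

lemma exists_polynomial_wt_setVal [CommSemiring R] (t : M.Trans) (c : M.Config) (j : ℕ) :
    ∃ w : R[X], ∀ x, M.wt t (M.setVal c j x) = w.eval x := by
  rcases t with ⟨_, _, _, _ | r⟩
  · by_cases h : c.2.2 = j
    · subst h; exact ⟨X, fun x => by simp [wt, setVal]⟩
    · exact ⟨C (c.2.1 c.2.2).2, fun x => by simp [wt, setVal, Function.update_of_ne h]⟩
  · exact ⟨C r, fun x => by simp [wt]⟩

lemma StepRel.setVal {c c' : M.Config} (h : M.StepRel c c') (j : ℕ) (x : R) :
    M.StepRel (M.setVal c j x) (M.setVal c' j x) := by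
  obtain ⟨t, ht, rfl⟩ := h
  exact ⟨t, by rwa [applicable_setVal], (stepTo_setVal t c j x).symm⟩

lemma PathLen.setVal {n : ℕ} {c c' : M.Config} (h : M.PathLen n c c') (j : ℕ) (x : R) :
    M.PathLen n (M.setVal c j x) (M.setVal c' j x) := by
  induction n generalizing c with
  | zero => exact congrArg (M.setVal · j x) h
  | succ n ih =>
    obtain ⟨c₁, hstep, hpath⟩ := h
    exact ⟨_, hstep.setVal j x, ih hpath⟩

lemma exists_polynomial_val_setVal [CommSemiring R] (fuel : ℕ) (c : M.Config) (j : ℕ) :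
    ∃ p : R[X], ∀ x, M.val fuel (M.setVal c j x) = p.eval x := by
  induction fuel generalizing c with
  | zero => exact ⟨1, fun x => by simp [val]⟩
  | succ fuel ih =>
    by_cases hA : M.applicable c = ∅
    · exact ⟨1, fun x => by simp [val, applicable_setVal, hA]⟩
    choose p hp using ih
    choose w hw using fun t => exists_polynomial_wt_setVal (M := M) t c j
    have hfin : (M.applicable c).Finite := M.trans_fin.subset fun t ht => ht.1
    refine ⟨∑ t ∈ hfin.toFinset, w t * p (M.stepTo t c), fun x => ?_⟩
    rw [val, applicable_setVal, if_neg hA, finsum_mem_eq_finite_toFinset_sum _ hfin,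
      eval_finsetSum]
    refine Finset.sum_congr rfl fun t _ => ?_
    rw [eval_mul, hw, stepTo_setVal, hp]

lemma val_eq_of_pathLen_le [CommSemiring R] {N : ℕ} {c : M.Config}
    (hc : ∀ k c', M.PathLen k c c' → k ≤ N) {fuel : ℕ} (hfuel : N ≤ fuel) :
    M.val fuel c = M.val N c := by
  induction N generalizing c fuel with
  | zero =>
    have hA : M.applicable c = ∅ := by
      refine Set.eq_empty_of_forall_notMem fun t ht => ?_
      exact absurd (hc 1 _ ⟨_, ⟨t, ht, rfl⟩, rfl⟩) (Nat.not_succ_le_zero 0)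
    cases fuel <;> simp [val, hA]
  | succ N ih =>
    obtain ⟨fuel, rfl⟩ : ∃ f, fuel = f + 1 := ⟨fuel - 1, by omega⟩
    simp only [val]
    refine if_congr Iff.rfl rfl (finsum_mem_congr rfl fun t ht => ?_)
    refine congrArg _ (ih (fuel := fuel) (fun k c' hpath => ?_) (by omega))
    have := hc (k + 1) c' ⟨_, ⟨t, ht, rfl⟩, hpath⟩
    omega

lemma initConfig_cons_inr [Zero R] (s : List (A ⊕ R)) (x y : R) :
    M.initConfig (Sum.inr x :: s) = M.setVal (M.initConfig (Sum.inr y :: s)) 0 x := by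
  simp only [initConfig, setVal, Prod.mk.injEq, true_and, and_true]
  funext i
  cases i <;> simp [initTape]

/-- All inputs `Sum.inr x :: s` share the computation paths of `Sum.inr 0 :: s`,
so the single bound `ℓ (Sum.inr 0 :: s)` serves as fuel for all of them. -/
theorem exists_polynomial_output_cons_inr [CommSemiring R] {ℓ : List (A ⊕ R) → ℕ}
    (hℓ : M.BoundedBy ℓ) (s : List (A ⊕ R)) :
    ∃ p : R[X], ∀ x, M.output ℓ (Sum.inr x :: s) = p.eval x := by
  obtain ⟨p, hp⟩ :=
    exists_polynomial_val_setVal (ℓ (Sum.inr 0 :: s)) (M.initConfig (Sum.inr 0 :: s)) 0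
  refine ⟨p, fun x => ?_⟩
  have hbound : ∀ k c, M.PathLen k (M.initConfig (Sum.inr x :: s)) c →
      k ≤ min (ℓ (Sum.inr 0 :: s)) (ℓ (Sum.inr x :: s)) := by
    intro k c hpath
    refine le_min ?_ (hℓ _ k c hpath)
    have h0 := hpath.setVal 0 0
    rw [initConfig_cons_inr s x 0, setVal_setVal, ← initConfig_cons_inr] at h0
    exact hℓ _ k _ h0
  rw [output, val_eq_of_pathLen_le hbound (min_le_right _ _),
    ← val_eq_of_pathLen_le hbound (min_le_left _ _), initConfig_cons_inr s x 0, hp]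

end SRTM

lemma Polynomial.eq_of_infinite_eval_eq_nat (p q : ℕ[X])
    (h : {n : ℕ | p.eval n = q.eval n}.Infinite) : p = q := by
  refine map_injective (Nat.castRingHom ℤ) Nat.cast_injective
    (eq_of_infinite_eval_eq _ _ ((h.image Nat.cast_injective.injOn).mono ?_))
  rintro _ ⟨n, hn, rfl⟩
  simp_all

lemma exists_eval_ne_recr_one_singleton (A : Type) (p : ℕ[X]) :
    ∃ n : ℕ, p.eval n ≠ recr 1 ([Sum.inr n] : List (A ⊕ ℕ)) := by
  by_contra! hp
  have hX : p = X + 1 := by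
    refine eq_of_infinite_eval_eq_nat _ _ ((Set.Ici_infinite 2).mono fun n hn => ?_)
    have hn : n ≠ 1 := by simp only [Set.mem_Ici] at hn; omega
    simp [hp n, recr, hn]
  simpa [hX, recr] using hp 1

/-- There are a commutative semiring `R` and an element `r ∈ R` such that no
terminating Semiring Turing Machine over `R` computes `rec_r`. -/
theorem exists_semiring_recr_not_SRTM_computable :
    ∃ (R : Type) (inst : CommSemiring R) (r : R),
      @RecrUncomputable R inst r := by
  refine ⟨ℕ, inferInstance, 1, fun A _ M ℓ hℓ => ?_⟩
  obtain ⟨p, hp⟩ := M.exists_polynomial_output_cons_inr hℓ []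
  obtain ⟨n, hn⟩ := exists_eval_ne_recr_one_singleton A p
  exact ⟨[Sum.inr n], by rwa [hp]⟩
end

section
/- For every commutative semiring R and every finite alphabet Σ_I, the SRTM M over R with R' = {0, 1}, states Q = {ι, right, left, turn_left, turn_right, fin}, tape alphabet Σ = Σ_I ∪ {⊔, X}, initial state ι, and transition relation δ consisting of: ((ι, X), (fin, X), 1, 0); ((ι, σ), (right, ⊔), 1, 1) for each σ ∈ Σ_I; ((ι, ⊔), (fin, ⊔), 1, 1); ((right, σ), (right, σ), 1, 1) for each σ ∈ Σ_I; ((right, X), (right, X), 1, 1); ((right, ⊔), (turn_left, ⊔), −1, 1); ((turn_left, X), (left, ⊔), −1, X); ((turn_left, σ), (fin, σ), −1, 0) for each σ ∈ Σ_I; ((turn_left, ⊔), (fin, ⊔), −1, 0); ((left, X), (left, X), −1, 1); ((left, σ), (left, σ), −1, 1) for each σ ∈ Σ_I; ((left, ⊔), (turn_right, ⊔), 1, 1); ((turn_right, X), (fin, X), 1, 0); ((turn_right, σ), (right, ⊔), 1, 1) for each σ ∈ Σ_I; ((turn_right, ⊔), (fin, ⊔), 1, 1), is terminating with polynomially bounded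 computation path lengths and satisfies ‖M‖ = f_R, the conditional product function. -/
open scoped Classical

open Classical in
/-- The conditional product function `f_R`: if the input is a block of
alphabet letters followed by an equally long block of semiring values, return
the product of the semiring values; otherwise return `0`. -/
noncomputable def condProd {R A : Type} [CommSemiring R] (x : List (A ⊕ R)) : R :=
  if ∃ (as : List A) (rs : List R),
      x = as.map Sum.inl ++ rs.map Sum.inr ∧ as.length = rs.length then
    (x.filterMap (fun e => match e with | Sum.inl _ => none | Sum.inr r => some r)).prod
  else 0

/-- The type of transitions of the conditional-product machine:
6 states (0 = ι, 1 = right, 2 = left, 3 = turn_left, 4 = turn_right, 5 = fin),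
2 extra symbols (0 = ⊔, 1 = X). -/
abbrev CPT (R A : Type) : Type :=
  (Fin 6 × (A ⊕ Fin 2)) × (Fin 6 × (A ⊕ Fin 2)) × Bool × Option R

/-- The transitions of the conditional-product machine not involving an input letter. -/
def cpConst (R A : Type) [CommSemiring R] : Fin 10 → CPT R A := fun i =>
  match i.val with
  | 0 => ((0, Sum.inr 1), (5, Sum.inr 1), true, some 0)
  | 1 => ((0, Sum.inr 0), (5, Sum.inr 0), true, some 1)
  | 2 => ((1, Sum.inr 1), (1, Sum.inr 1), true, some 1)
  | 3 => ((1, Sum.inr 0), (3, Sum.inr 0), false, some 1)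
  | 4 => ((3, Sum.inr 1), (2, Sum.inr 0), false, none)
  | 5 => ((3, Sum.inr 0), (5, Sum.inr 0), false, some 0)
  | 6 => ((2, Sum.inr 1), (2, Sum.inr 1), false, some 1)
  | 7 => ((2, Sum.inr 0), (4, Sum.inr 0), true, some 1)
  | 8 => ((4, Sum.inr 1), (5, Sum.inr 1), true, some 0)
  | _ => ((4, Sum.inr 0), (5, Sum.inr 0), true, some 1)

/-- The five letter-parametrized transition families of the conditional-product machine. -/
def cpLetter (R A : Type) [CommSemiring R] : Fin 5 → A → CPT R A := fun i a =>
  match i.val with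
  | 0 => ((0, Sum.inl a), (1, Sum.inr 0), true, some 1)
  | 1 => ((1, Sum.inl a), (1, Sum.inl a), true, some 1)
  | 2 => ((3, Sum.inl a), (5, Sum.inl a), false, some 0)
  | 3 => ((2, Sum.inl a), (2, Sum.inl a), false, some 1)
  | _ => ((4, Sum.inl a), (1, Sum.inr 0), true, some 1)

/-- The SRTM of Example 2.6 computing the conditional product function. -/
noncomputable def condProdMachine (R A : Type) [CommSemiring R] [Fintype A] :
    SRTM R A where
  nQ := 6
  nE := 2
  blankE := 0
  phE := 1
  blank_ne_ph := by decide
  start := 0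
  weights := {0, 1}
  weights_fin := (Set.finite_singleton (1 : R)).insert 0
  trans := Set.range (fun i : Fin 10 ⊕ Fin 5 × A =>
    Sum.elim (cpConst R A) (fun p => cpLetter R A p.1 p.2) i)
  trans_fin := Set.finite_range _
  trans_wt := by
    rintro t ⟨i, rfl⟩ r hr
    rcases i with i | ⟨i, a⟩ <;> fin_cases i <;>
      simp_all [cpConst, cpLetter, Set.mem_insert_iff]


/-!
The machine is deterministic, so the value of a configuration is the product of the weights
along its unique run. The states `ι` and `turn_right` act identically: on `⊔` they accept
(weight 1), on `X` they reject (weight 0), and on a letter they erase it and sweep right to the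
last cell of the remaining input. There `turn_left` rejects unless it reads an `X`; it then
collects the value of that cell, erases it and sweeps back left to `turn_right`. A round thus
strips a leading letter and a trailing value, as in
`condProd (a :: u ++ [r]) = condProd u * r`, and costs `2n + 1` steps on an input of length
`n`, so every run on `s` has length at most `(|s| + 1)²`. Once the fuel exceeds the length of
every run, `val` no longer depends on it, so the output does not depend on the chosen bound `ℓ`.
-/

theorem Function.update_eq_self_of_fst_eq {α β γ : Type*} [DecidableEq α] {f : α → β × γ}
    {a : α} {b : β} (h : (f a).1 = b) : Function.update f a (b, (f a).2) = f := by
  rw [← h]; exact Function.update_eq_self a f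

namespace SRTM

variable {R A : Type}

section Semiring

variable [CommSemiring R] (M : SRTM R A)

theorem val_of_applicable_eq_empty {c : M.Config} (h : M.applicable c = ∅) :
    ∀ n, M.val n c = 1
  | 0 => rfl
  | n + 1 => by rw [val, if_pos h]

theorem val_succ_of_applicable_eq_singleton {c : M.Config} {t : M.Trans}
    (h : M.applicable c = {t}) (n : ℕ) :
    M.val (n + 1) c = M.wt t c * M.val n (M.stepTo t c) := by
  rw [val, if_neg (h ▸ Set.singleton_ne_empty t), h, finsum_mem_singleton]

theorem val_eq_of_forall_pathLen_le {n m : ℕ} {c : M.Config}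
    (h : ∀ k c', M.PathLen k c c' → k ≤ n) (hnm : n ≤ m) : M.val m c = M.val n c := by
  induction n generalizing c m with
  | zero =>
    have happ : M.applicable c = ∅ :=
      Set.eq_empty_of_forall_notMem fun t ht => by
        have := h 1 _ ⟨_, ⟨t, ht, rfl⟩, rfl⟩
        omega
    rw [val_of_applicable_eq_empty M happ, val_of_applicable_eq_empty M happ]
  | succ n ih =>
    obtain ⟨m, rfl⟩ : ∃ m', m = m' + 1 := ⟨m - 1, by omega⟩
    rw [val, val]
    refine if_congr Iff.rfl rfl (finsum_mem_congr rfl fun t ht => ?_)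
    rw [ih (fun k c' hk => Nat.le_of_succ_le_succ (h _ _ ⟨_, ⟨t, ht, rfl⟩, hk⟩)) (by omega)]

def HaltsWithin (c : M.Config) (k : ℕ) (w : R) : Prop :=
  (∀ n c', M.PathLen n c c' → n ≤ k) ∧ M.val k c = w

variable {M}

theorem HaltsWithin.mono {c : M.Config} {k k' : ℕ} {w : R} (h : M.HaltsWithin c k w)
    (hk : k ≤ k') : M.HaltsWithin c k' w :=
  ⟨fun n c' hn => (h.1 n c' hn).trans hk, (val_eq_of_forall_pathLen_le M h.1 hk).trans h.2⟩

theorem haltsWithin_of_applicable_eq_empty {c : M.Config} (h : M.applicable c = ∅) :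
    M.HaltsWithin c 0 1 := by
  refine ⟨fun n c' hn => ?_, rfl⟩
  cases n with
  | zero => rfl
  | succ n =>
    obtain ⟨_, ⟨t, ht, -⟩, -⟩ := hn
    simp [h] at ht

theorem HaltsWithin.of_applicable_eq_singleton {c : M.Config} {t : M.Trans} {k : ℕ} {w : R}
    (h : M.applicable c = {t}) (hnext : M.HaltsWithin (M.stepTo t c) k w) :
    M.HaltsWithin c (k + 1) (M.wt t c * w) := by
  refine ⟨fun n c' hn => ?_, by rw [val_succ_of_applicable_eq_singleton M h, hnext.2]⟩
  cases n with
  | zero => omega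
  | succ n =>
    obtain ⟨_, ⟨t', ht', rfl⟩, hn⟩ := hn
    rw [h, Set.mem_singleton_iff] at ht'
    subst ht'
    exact Nat.succ_le_succ (hnext.1 n c' hn)

theorem output_eq_of_haltsWithin {ℓ : List (A ⊕ R) → ℕ} (hℓ : M.BoundedBy ℓ)
    {s : List (A ⊕ R)} {k : ℕ} {w : R} (h : M.HaltsWithin (M.initConfig s) k w) :
    M.output ℓ s = w := by
  rw [output, ← val_eq_of_forall_pathLen_le M (hℓ s) (le_max_right k (ℓ s)),
    (h.mono (le_max_left k (ℓ s))).2]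

end Semiring

variable (M : SRTM R A)

theorem applicable_eq_singleton (hdet : Set.InjOn Prod.fst M.trans) {c : M.Config}
    {t : M.Trans} (ht : t ∈ M.trans) (hsrc : t.1 = (c.1, (c.2.1 c.2.2).1)) :
    M.applicable c = {t} := by
  ext t'
  simp only [applicable, Set.mem_ofPred_eq, Set.mem_singleton_iff]
  constructor
  · rintro ⟨ht', h1, h2⟩
    exact hdet ht' ht (by rw [hsrc]; exact Prod.ext h1 h2)
  · rintro rfl
    exact ⟨ht, congrArg Prod.fst hsrc, congrArg Prod.snd hsrc⟩

variable {q : Fin M.nQ} {T : ℕ → M.Sym × R} {p : ℕ} {t : M.Trans}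

theorem stepTo_of_right (h : t.2.2.1 = true) :
    M.stepTo t (q, T, p) = (t.2.1.1, Function.update T p (t.2.1.2, (T p).2), p + 1) := by
  simp only [stepTo, h, if_true, Prod.mk.injEq, true_and]
  omega

theorem stepTo_of_left (h : t.2.2.1 = false) :
    M.stepTo t (q, T, p + 1) =
      (t.2.1.1, Function.update T (p + 1) (t.2.1.2, (T (p + 1)).2), p) := by
  simp [stepTo, h]

end SRTM

section CondProd

variable {R A : Type} [CommSemiring R]

theorem condProd_nil : condProd ([] : List (A ⊕ R)) = 1 := by
  simp [condProd]

theorem condProd_inr_cons (r : R) (t : List (A ⊕ R)) : condProd (Sum.inr r :: t) = 0 := by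
  rw [condProd, if_neg]
  rintro ⟨_ | ⟨a, as⟩, _ | ⟨r', rs⟩, h, hl⟩ <;> simp_all

theorem condProd_concat_inl (t : List (A ⊕ R)) (a : A) : condProd (t ++ [Sum.inl a]) = 0 := by
  rw [condProd, if_neg]
  rintro ⟨as, rs, h, hl⟩
  rcases rs.eq_nil_or_concat with rfl | ⟨rs, r, rfl⟩
  · rcases as with _ | ⟨a', as⟩ <;> simp_all
  · simp [← List.append_assoc] at h

theorem condProd_inl_cons_concat_inr (a : A) (t : List (A ⊕ R)) (r : R) :
    condProd (Sum.inl a :: (t ++ [Sum.inr r])) = condProd t * r := by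
  have hiff : (∃ (as : List A) (rs : List R), Sum.inl a :: (t ++ [Sum.inr r]) =
      as.map Sum.inl ++ rs.map Sum.inr ∧ as.length = rs.length) ↔
      ∃ (as : List A) (rs : List R), t = as.map Sum.inl ++ rs.map Sum.inr ∧
        as.length = rs.length := by
    constructor
    · rintro ⟨_ | ⟨a', as⟩, rs, h, hl⟩
      · cases rs <;> simp_all
      rcases rs.eq_nil_or_concat with rfl | ⟨rs, r', rfl⟩
      · simp at hl
      simp only [List.map_cons, List.concat_eq_append, List.map_append, List.map_nil,
        ← List.append_assoc, List.cons_append, List.cons.injEq, List.append_singleton_inj] at h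
      exact ⟨as, rs, h.2.1, by simpa using hl⟩
    · rintro ⟨as, rs, rfl, hl⟩
      exact ⟨a :: as, rs ++ [r], by simp, by simp [hl]⟩
  unfold condProd
  rw [if_congr hiff rfl rfl]
  split_ifs <;> simp [List.filterMap_append]

end CondProd

namespace CondProdMachine

open SRTM

section Tape

variable {R A : Type} [Zero R]

def inputCell : A ⊕ R → (A ⊕ Fin 2) × R
  | .inl a => (.inl a, 0)
  | .inr r => (.inr 1, r)

theorem inputCell_fst_ne_blank (x : A ⊕ R) : (inputCell x).1 ≠ .inr 0 := by
  cases x <;> simp [inputCell]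

def InputAt (T : ℕ → (A ⊕ Fin 2) × R) (p : ℕ) (s : List (A ⊕ R)) : Prop :=
  (∀ i (hi : i < s.length), T (p + i) = inputCell s[i]) ∧ (T (p + s.length)).1 = .inr 0

variable {T : ℕ → (A ⊕ Fin 2) × R} {p : ℕ} {s : List (A ⊕ R)} {x : A ⊕ R}

theorem InputAt.fst_ne_blank (hs : InputAt T p s) {i : ℕ} (hi : i < s.length) :
    (T (p + i)).1 ≠ .inr 0 := by
  rw [hs.1 i hi]; exact inputCell_fst_ne_blank _

theorem InputAt.head_eq (hs : InputAt T p (x :: s)) : T p = inputCell x :=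
  hs.1 0 (by simp)

theorem InputAt.update_head (hs : InputAt T p (x :: s)) (c : (A ⊕ Fin 2) × R) :
    InputAt (Function.update T p c) (p + 1) s := by
  refine ⟨fun i hi => ?_, ?_⟩
  · rw [Function.update_of_ne (by omega), Nat.add_right_comm]
    exact hs.1 (i + 1) (by simpa using hi)
  · rw [Function.update_of_ne (by omega)]
    simpa [Nat.add_right_comm, Nat.add_assoc] using hs.2

theorem InputAt.last_eq (hs : InputAt T p (s ++ [x])) : T (p + s.length) = inputCell x := by
  simpa using hs.1 s.length (by simp)

theorem InputAt.erase_last (hs : InputAt T p (s ++ [x])) (v : R) :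
    InputAt (Function.update T (p + s.length) (.inr 0, v)) p s := by
  refine ⟨fun i hi => ?_, by simp⟩
  have hi' : i < (s ++ [x]).length := by
    simp only [List.length_append, List.length_singleton]; omega
  rw [Function.update_of_ne (by omega), hs.1 i hi', List.getElem_append_left hi]

end Tape

variable {R A : Type} [CommSemiring R] [Fintype A]

theorem trans_injOn : Set.InjOn (Prod.fst : CPT R A → _) (condProdMachine R A).trans := by
  rintro _ ⟨i | ⟨i, a⟩, rfl⟩ _ ⟨j | ⟨j, b⟩, rfl⟩ h <;> fin_cases i <;> fin_cases j <;>
    simp_all [cpConst, cpLetter]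

theorem source_ne_fin {t : CPT R A} (ht : t ∈ (condProdMachine R A).trans) : t.1.1 ≠ 5 := by
  obtain ⟨i | ⟨i, a⟩, rfl⟩ := ht <;> fin_cases i <;> simp [cpConst, cpLetter]

theorem inputAt_initTape (s : List (A ⊕ R)) :
    InputAt ((condProdMachine R A).initTape s) 0 s := by
  refine ⟨fun i hi => ?_, ?_⟩
  · simp only [SRTM.initTape, zero_add, List.getElem?_eq_getElem hi]
    cases s[i] <;> rfl
  · simp only [SRTM.initTape, zero_add, List.getElem?_eq_none le_rfl]
    rfl

/-- Numerals do not elaborate in `Fin (condProdMachine R A).nQ`, but they do in `Fin 6`. -/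
abbrev cfg (q : Fin 6) (T : ℕ → (A ⊕ Fin 2) × R) (p : ℕ) : (condProdMachine R A).Config :=
  (q, T, p)

variable {q q' : Fin 6} {T T' : ℕ → (A ⊕ Fin 2) × R} {p k n : ℕ} {v w : R} {t : CPT R A}

theorem haltsWithin_fin : (condProdMachine R A).HaltsWithin (cfg 5 T p) 0 1 :=
  haltsWithin_of_applicable_eq_empty <| Set.eq_empty_of_forall_notMem fun _ ht =>
    source_ne_fin ht.1 ht.2.1

theorem HaltsWithin.of_transition (ht : t ∈ (condProdMachine R A).trans)
    (hsrc : t.1 = (q, (T p).1)) (hwt : t.2.2.2.getD (T p).2 = v)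
    (h : (condProdMachine R A).HaltsWithin ((condProdMachine R A).stepTo t (cfg q T p)) k w) :
    (condProdMachine R A).HaltsWithin (cfg q T p) (k + 1) (v * w) :=
  hwt ▸ h.of_applicable_eq_singleton (applicable_eq_singleton _ trans_injOn ht hsrc)

theorem haltsWithin_of_transition_to_fin (ht : t ∈ (condProdMachine R A).trans)
    (hsrc : t.1 = (q, (T p).1)) (hdst : t.2.1.1 = 5) (hwt : t.2.2.2.getD (T p).2 = v) :
    (condProdMachine R A).HaltsWithin (cfg q T p) 1 v := by
  have hstep : (condProdMachine R A).stepTo t (cfg q T p) = cfg 5 _ _ := Prod.ext hdst rfl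
  rw [← mul_one v]
  exact HaltsWithin.of_transition ht hsrc hwt (hstep ▸ haltsWithin_fin)

theorem HaltsWithin.of_transition_right (ht : t ∈ (condProdMachine R A).trans)
    (hsrc : t.1 = (q, (T p).1)) (hwt : t.2.2.2.getD (T p).2 = v) (hdir : t.2.2.1 = true)
    (hdst : t.2.1.1 = q') (htape : Function.update T p (t.2.1.2, (T p).2) = T')
    (h : (condProdMachine R A).HaltsWithin (cfg q' T' (p + 1)) k w) :
    (condProdMachine R A).HaltsWithin (cfg q T p) (k + 1) (v * w) := by
  have hstep : (condProdMachine R A).stepTo t (cfg q T p) = cfg q' T' (p + 1) := by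
    subst hdst htape; exact stepTo_of_right _ hdir
  exact HaltsWithin.of_transition ht hsrc hwt (hstep ▸ h)

theorem HaltsWithin.of_transition_left (ht : t ∈ (condProdMachine R A).trans)
    (hsrc : t.1 = (q, (T (p + 1)).1)) (hwt : t.2.2.2.getD (T (p + 1)).2 = v)
    (hdir : t.2.2.1 = false) (hdst : t.2.1.1 = q')
    (htape : Function.update T (p + 1) (t.2.1.2, (T (p + 1)).2) = T')
    (h : (condProdMachine R A).HaltsWithin (cfg q' T' p) k w) :
    (condProdMachine R A).HaltsWithin (cfg q T (p + 1)) (k + 1) (v * w) := by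
  have hstep : (condProdMachine R A).stepTo t (cfg q T (p + 1)) = cfg q' T' p := by
    subst hdst htape; exact stepTo_of_left _ hdir
  exact HaltsWithin.of_transition ht hsrc hwt (hstep ▸ h)

theorem haltsWithin_start_blank (hq : q = 0 ∨ q = 4) (hT : (T p).1 = .inr 0) :
    (condProdMachine R A).HaltsWithin (cfg q T p) 1 1 := by
  rcases hq with rfl | rfl
  · exact haltsWithin_of_transition_to_fin (t := cpConst R A 1) ⟨.inl 1, rfl⟩
      (by rw [hT]; rfl) rfl rfl
  · exact haltsWithin_of_transition_to_fin (t := cpConst R A 9) ⟨.inl 9, rfl⟩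
      (by rw [hT]; rfl) rfl rfl

theorem haltsWithin_start_X (hq : q = 0 ∨ q = 4) (hT : (T p).1 = .inr 1) :
    (condProdMachine R A).HaltsWithin (cfg q T p) 1 0 := by
  rcases hq with rfl | rfl
  · exact haltsWithin_of_transition_to_fin (t := cpConst R A 0) ⟨.inl 0, rfl⟩
      (by rw [hT]; rfl) rfl rfl
  · exact haltsWithin_of_transition_to_fin (t := cpConst R A 8) ⟨.inl 8, rfl⟩
      (by rw [hT]; rfl) rfl rfl

theorem HaltsWithin.start_letter {a : A} (hq : q = 0 ∨ q = 4) (hT : (T p).1 = .inl a)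
    (h : (condProdMachine R A).HaltsWithin
      (cfg 1 (Function.update T p (.inr 0, (T p).2)) (p + 1)) k w) :
    (condProdMachine R A).HaltsWithin (cfg q T p) (k + 1) w := by
  rw [← one_mul w]
  rcases hq with rfl | rfl
  · exact HaltsWithin.of_transition_right (t := cpLetter R A 0 a) ⟨.inr (0, a), rfl⟩
      (by rw [hT]; rfl) rfl rfl rfl rfl h
  · exact HaltsWithin.of_transition_right (t := cpLetter R A 4 a) ⟨.inr (4, a), rfl⟩
      (by rw [hT]; rfl) rfl rfl rfl rfl h

theorem HaltsWithin.right_of_ne_blank (hT : (T p).1 ≠ .inr 0)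
    (h : (condProdMachine R A).HaltsWithin (cfg 1 T (p + 1)) k w) :
    (condProdMachine R A).HaltsWithin (cfg 1 T p) (k + 1) w := by
  rw [← one_mul w]
  rcases hs : (T p).1 with a | s
  · exact HaltsWithin.of_transition_right (t := cpLetter R A 1 a) ⟨.inr (1, a), rfl⟩
      (by rw [hs]; rfl) rfl rfl rfl (Function.update_eq_self_of_fst_eq hs) h
  · fin_cases s
    · exact absurd hs hT
    · exact HaltsWithin.of_transition_right (t := cpConst R A 2) ⟨.inl 2, rfl⟩
        (by rw [hs]; rfl) rfl rfl rfl (Function.update_eq_self_of_fst_eq hs) h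

theorem HaltsWithin.scan_right (hne : ∀ i < n, (T (p + i)).1 ≠ .inr 0)
    (h : (condProdMachine R A).HaltsWithin (cfg 1 T (p + n)) k w) :
    (condProdMachine R A).HaltsWithin (cfg 1 T p) (k + n) w := by
  induction n generalizing p with
  | zero => exact h
  | succ n ih =>
    refine HaltsWithin.right_of_ne_blank (hne 0 (by omega))
      (ih (p := p + 1) (fun i hi => ?_) ?_)
    · simpa [Nat.add_assoc, Nat.add_comm 1] using hne (i + 1) (by omega)
    · rwa [Nat.add_right_comm, Nat.add_assoc]

theorem HaltsWithin.right_blank (hT : (T (p + 1)).1 = .inr 0)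
    (h : (condProdMachine R A).HaltsWithin (cfg 3 T p) k w) :
    (condProdMachine R A).HaltsWithin (cfg 1 T (p + 1)) (k + 1) w := by
  rw [← one_mul w]
  exact HaltsWithin.of_transition_left (t := cpConst R A 3) ⟨.inl 3, rfl⟩
    (by rw [hT]; rfl) rfl rfl rfl (Function.update_eq_self_of_fst_eq hT) h

theorem haltsWithin_turnLeft_of_ne_X (hT : (T p).1 ≠ .inr 1) :
    (condProdMachine R A).HaltsWithin (cfg 3 T p) 1 0 := by
  rcases hs : (T p).1 with a | s
  · exact haltsWithin_of_transition_to_fin (t := cpLetter R A 2 a) ⟨.inr (2, a), rfl⟩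
      (by rw [hs]; rfl) rfl rfl
  · fin_cases s
    · exact haltsWithin_of_transition_to_fin (t := cpConst R A 5) ⟨.inl 5, rfl⟩
        (by rw [hs]; rfl) rfl rfl
    · exact absurd hs hT

theorem HaltsWithin.turnLeft_X (hT : T (p + 1) = (.inr 1, v))
    (h : (condProdMachine R A).HaltsWithin
      (cfg 2 (Function.update T (p + 1) (.inr 0, v)) p) k w) :
    (condProdMachine R A).HaltsWithin (cfg 3 T (p + 1)) (k + 1) (v * w) :=
  HaltsWithin.of_transition_left (t := cpConst R A 4) ⟨.inl 4, rfl⟩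
    (by rw [hT]; rfl) (by rw [hT]; rfl) rfl rfl (by rw [hT]; rfl) h

theorem HaltsWithin.left_of_ne_blank (hT : (T (p + 1)).1 ≠ .inr 0)
    (h : (condProdMachine R A).HaltsWithin (cfg 2 T p) k w) :
    (condProdMachine R A).HaltsWithin (cfg 2 T (p + 1)) (k + 1) w := by
  rw [← one_mul w]
  rcases hs : (T (p + 1)).1 with a | s
  · exact HaltsWithin.of_transition_left (t := cpLetter R A 3 a) ⟨.inr (3, a), rfl⟩
      (by rw [hs]; rfl) rfl rfl rfl (Function.update_eq_self_of_fst_eq hs) h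
  · fin_cases s
    · exact absurd hs hT
    · exact HaltsWithin.of_transition_left (t := cpConst R A 6) ⟨.inl 6, rfl⟩
        (by rw [hs]; rfl) rfl rfl rfl (Function.update_eq_self_of_fst_eq hs) h

theorem HaltsWithin.scan_left (hne : ∀ i < n, (T (p + 1 + i)).1 ≠ .inr 0)
    (h : (condProdMachine R A).HaltsWithin (cfg 2 T p) k w) :
    (condProdMachine R A).HaltsWithin (cfg 2 T (p + n)) (k + n) w := by
  induction n with
  | zero => exact h
  | succ n ih =>
    exact HaltsWithin.left_of_ne_blank (by simpa [Nat.add_right_comm] using hne n (by omega))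
      (ih fun i hi => hne i (by omega))

theorem HaltsWithin.left_blank (hT : (T p).1 = .inr 0)
    (h : (condProdMachine R A).HaltsWithin (cfg 4 T (p + 1)) k w) :
    (condProdMachine R A).HaltsWithin (cfg 2 T p) (k + 1) w := by
  rw [← one_mul w]
  exact HaltsWithin.of_transition_right (t := cpConst R A 7) ⟨.inl 7, rfl⟩
    (by rw [hT]; rfl) rfl rfl rfl (Function.update_eq_self_of_fst_eq hT) h

theorem HaltsWithin.start_round {a : A} {t : List (A ⊕ R)} (hq : q = 0 ∨ q = 4)
    (hs : InputAt T p (.inl a :: t))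
    (h : (condProdMachine R A).HaltsWithin
      (cfg 3 (Function.update T p (.inr 0, (T p).2)) (p + t.length)) k w) :
    (condProdMachine R A).HaltsWithin (cfg q T p) (k + 1 + t.length + 1) w := by
  have hs₁ := hs.update_head (.inr 0, (T p).2)
  refine HaltsWithin.start_letter hq (by rw [hs.head_eq]; rfl)
    (HaltsWithin.scan_right (fun i hi => hs₁.fst_ne_blank hi) ?_)
  rw [Nat.add_right_comm]
  exact HaltsWithin.right_blank (by rw [Nat.add_right_comm]; exact hs₁.2) h

theorem haltsWithin_condProd {q : Fin 6} {T : ℕ → (A ⊕ Fin 2) × R} {p : ℕ}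
    {s : List (A ⊕ R)} (hq : q = 0 ∨ q = 4) (hs : InputAt T p s) :
    (condProdMachine R A).HaltsWithin (cfg q T p) ((s.length + 1) ^ 2) (condProd s) := by
  match s, hs with
  | [], hs =>
    rw [condProd_nil]
    exact (haltsWithin_start_blank hq (by simpa using hs.2)).mono le_rfl
  | .inr r :: t, hs =>
    rw [condProd_inr_cons]
    exact (haltsWithin_start_X hq (by rw [hs.head_eq]; rfl)).mono
      (Nat.one_le_pow _ _ (by omega))
  | .inl a :: t, hs =>
    set T₁ := Function.update T p (.inr 0, (T p).2)
    have hs₁ : InputAt T₁ (p + 1) t := hs.update_head _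
    rcases t.eq_nil_or_concat' with rfl | ⟨u, x, rfl⟩
    · rw [show condProd [Sum.inl a] = (0 : R) from condProd_concat_inl [] a]
      exact (HaltsWithin.start_round hq hs
        (haltsWithin_turnLeft_of_ne_X (by simp))).mono (by simp)
    have hlast : T₁ (p + u.length + 1) = inputCell x := by
      rw [Nat.add_right_comm]; exact hs₁.last_eq
    have hpos : p + u.length + 1 = p + (u ++ [x]).length := by simp [Nat.add_assoc]
    rcases x with b | r
    · have hturn := haltsWithin_turnLeft_of_ne_X (T := T₁) (p := p + u.length + 1)
        (by rw [hlast]; simp [inputCell])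
      rw [hpos] at hturn
      rw [← List.cons_append, condProd_concat_inl]
      refine (HaltsWithin.start_round hq hs hturn).mono ?_
      simp only [List.length_append, List.length_cons, List.length_nil]
      nlinarith
    · have hs₂ : InputAt (Function.update T₁ (p + u.length + 1) (.inr 0, r)) (p + 1) u := by
        rw [Nat.add_right_comm]; exact hs₁.erase_last r
      have hturn := HaltsWithin.turnLeft_X hlast <|
        HaltsWithin.scan_left (fun i hi => hs₂.fst_ne_blank hi) <|
          HaltsWithin.left_blank (by rw [Function.update_of_ne (by omega)]; simp [T₁]) <|
            haltsWithin_condProd (Or.inr rfl) hs₂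
      rw [hpos] at hturn
      rw [condProd_inl_cons_concat_inr, mul_comm]
      refine (HaltsWithin.start_round hq hs hturn).mono ?_
      simp only [List.length_append, List.length_cons, List.length_nil]
      nlinarith
termination_by s.length

end CondProdMachine

/-- The machine `condProdMachine` is terminating with polynomially bounded
computation path lengths, and its output is the conditional product function `f_R`. -/
theorem condProdMachine_correct (R A : Type) [CommSemiring R] [Fintype A] :
    (∃ (ℓ : List (A ⊕ R) → ℕ) (p : Polynomial ℕ),
        (condProdMachine R A).BoundedBy ℓ ∧ ∀ s, ℓ s ≤ p.eval s.length) ∧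
    (∀ ℓ : List (A ⊕ R) → ℕ, (condProdMachine R A).BoundedBy ℓ →
        ∀ s : List (A ⊕ R), (condProdMachine R A).output ℓ s = condProd s) := by
  have halts (s : List (A ⊕ R)) : (condProdMachine R A).HaltsWithin
      ((condProdMachine R A).initConfig s) ((s.length + 1) ^ 2) (condProd s) :=
    CondProdMachine.haltsWithin_condProd (Or.inl rfl) (CondProdMachine.inputAt_initTape s)
  refine ⟨⟨fun s => (s.length + 1) ^ 2, (.X + 1) ^ 2, fun s _ _ h => (halts s).1 _ _ h,
    fun s => by simp⟩, fun ℓ hℓ s => SRTM.output_eq_of_haltsWithin hℓ (halts s)⟩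
end

section
/- Let R be a commutative semiring and let M = (R', Q, Σ_I, Σ, ι, X, ⊔, δ) be a terminating SRTM over R. If an input s ∈ Σ_I* contains no semiring values, then the output ‖M‖(s) lies in the subsemiring of R generated by the finite set R'. Consequently, every function in NP_finite(R) has range contained in a finitely generated subsemiring of R; in particular, if R is not finitely generated as a semiring, then no function in NP_finite(R) is surjective onto R. -/
open scoped Classical

/-- `NP_finite(R)`: functions on pure alphabet strings (no semiring values in
the input) computed by terminating SRTMs with polynomially bounded path
lengths. -/
def NPfinite (R : Type) [CommSemiring R] (A : Type) [Fintype A]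
    (f : List A → R) : Prop :=
  ∃ (M : SRTM R A) (ℓ : List (A ⊕ R) → ℕ) (p : Polynomial ℕ),
    M.BoundedBy ℓ ∧ (∀ s, ℓ s ≤ p.eval s.length) ∧
    ∀ s : List A, f s = M.output ℓ (s.map Sum.inl)

/-!
Semiring components of tape cells never change, and on an input without semiring values they
are all `0`. Hence every weight met along a computation is a fixed weight from `R'` or `0`, so
by induction on the fuel the value of every configuration is a sum of products of such weights.
-/

namespace SRTM

variable {R A : Type}

theorem applicable_finite (M : SRTM R A) (c : M.Config) : (M.applicable c).Finite :=
  M.trans_fin.subset fun _ ht => ht.1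

@[simp]
theorem stepTo_tape_snd (M : SRTM R A) (t : M.Trans) (c : M.Config) (i : ℕ) :
    ((M.stepTo t c).2.1 i).2 = (c.2.1 i).2 := by
  rcases eq_or_ne i c.2.2 with rfl | hi
  · simp [stepTo]
  · simp [stepTo, Function.update_of_ne hi]

@[simp]
theorem initTape_map_inl_snd [Zero R] (M : SRTM R A) (s : List A) (i : ℕ) :
    (M.initTape (s.map Sum.inl) i).2 = 0 := by
  unfold initTape
  split <;> simp_all [List.getElem?_map]

variable [CommSemiring R]

theorem wt_mem {M : SRTM R A} {T : Subsemiring R} (hT : M.weights ⊆ T) {t : M.Trans}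
    (ht : t ∈ M.trans) {c : M.Config} (hc : (c.2.1 c.2.2).2 ∈ T) : M.wt t c ∈ T := by
  rcases h : t.2.2.2 with _ | r
  · simpa [wt, h] using hc
  · simpa [wt, h] using hT (M.trans_wt t ht r h)

theorem val_mem {M : SRTM R A} {T : Subsemiring R} (hT : M.weights ⊆ T) :
    ∀ (n : ℕ) (c : M.Config), (∀ i, (c.2.1 i).2 ∈ T) → M.val n c ∈ T
  | 0, _, _ => T.one_mem
  | n + 1, c, hc => by
    rw [val]
    split
    · exact T.one_mem
    · rw [finsum_mem_eq_finite_toFinset_sum _ (M.applicable_finite c)]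
      refine T.sum_mem fun t ht => T.mul_mem ?_ ?_
      · exact wt_mem hT ((Set.Finite.mem_toFinset _).1 ht).1 (hc _)
      · exact val_mem hT n _ fun i => (M.stepTo_tape_snd t c i).symm ▸ hc i

theorem output_map_inl_mem_closure_weights (M : SRTM R A) (ℓ : List (A ⊕ R) → ℕ)
    (s : List A) : M.output ℓ (s.map Sum.inl) ∈ Subsemiring.closure M.weights :=
  val_mem Subsemiring.subset_closure _ _ fun i => by simp [initConfig]

end SRTM

theorem NPfinite.exists_finite_closure {R A : Type} [CommSemiring R] [Fintype A]
    {f : List A → R} (hf : NPfinite R A f) :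
    ∃ S : Set R, S.Finite ∧ ∀ s, f s ∈ Subsemiring.closure S := by
  obtain ⟨M, ℓ, -, -, -, hout⟩ := hf
  exact ⟨M.weights, M.weights_fin, fun s => hout s ▸ M.output_map_inl_mem_closure_weights ℓ s⟩

theorem Subsemiring.closure_eq_top_of_surjective {R ι : Type} [Semiring R] {f : ι → R}
    (hf : Function.Surjective f) {S : Set R} (hS : ∀ i, f i ∈ closure S) : closure S = ⊤ :=
  eq_top_iff.2 fun r _ => (hf r).elim fun i hi => hi ▸ hS i

/-- On inputs without semiring values, the output of a terminating SRTM lies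
in the subsemiring generated by its finite set `R'` of fixed weights; hence
every `NP_finite(R)` function has range in a finitely generated subsemiring,
and if `R` is not finitely generated as a semiring then no `NP_finite(R)`
function is surjective. -/
theorem SRTM_output_mem_closure_weights (R : Type) [CommSemiring R]
    (A : Type) [Fintype A] :
    (∀ (M : SRTM R A) (ℓ : List (A ⊕ R) → ℕ), M.BoundedBy ℓ →
      ∀ s : List A, M.output ℓ (s.map Sum.inl) ∈ Subsemiring.closure M.weights) ∧
    (∀ f : List A → R, NPfinite R A f →
      ∃ S : Set R, S.Finite ∧ ∀ s, f s ∈ Subsemiring.closure S) ∧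
    ((¬ ∃ S : Set R, S.Finite ∧ Subsemiring.closure S = ⊤) →
      ∀ f : List A → R, NPfinite R A f → ¬ Function.Surjective f) := by
  refine ⟨fun M ℓ _ => M.output_map_inl_mem_closure_weights ℓ,
    fun _ hf => hf.exists_finite_closure, fun hnfg f hf hsurj => hnfg ?_⟩
  obtain ⟨S, hS, hmem⟩ := hf.exists_finite_closure
  exact ⟨S, hS, Subsemiring.closure_eq_top_of_surjective hsurj hmem⟩
end
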